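/- arXiv:1209.2678 — 2 statements merged into one kernel-verified Lean document; each statement's English description precedes it below -/
import Mathlib

section
/- Fix an integer K ≥ 1 and for each integer x ≥ 1 set N₁ = 3 and N₂ = x²K. Then Q_N(𝐕_{K,3,x²K}, G_{K,3,x²K}) = 1 − (4 + (x²K−1)²)/(K(1 + x²K)²), and this quantity converges to 1 − 1/K as x → ∞. -/
open scoped Classical

noncomputable section

namespace BadComm

variable {V : Type*} [Fintype V]

/-- The finset of edges of a simple graph `G`. -/
def edgeFin (G : SimpleGraph V) : Finset (Sym2 V) :=
  Finset.univ.filter (fun e => e ∈ G.edgeSet)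

/-- The number of edges `m` of `G`. -/
def numEdges (G : SimpleGraph V) : ℕ := (edgeFin G).card

/-- The degree of a node. -/
def deg (G : SimpleGraph V) (v : V) : ℕ := (Finset.univ.filter (fun w => G.Adj v w)).card

/-- A clustering is encoded as a labelling `c : V → ℕ`; cluster `k` is the set of nodes
with label `k`.  `clusterDeg G c k` is the total degree of cluster `k`. -/
def clusterDeg (G : SimpleGraph V) (c : V → ℕ) (k : ℕ) : ℕ :=
  ∑ v ∈ Finset.univ.filter (fun v => c v = k), deg G v

/-- An unordered pair is intracluster when all of its members carry the same label. -/
def sameCluster (c : V → ℕ) (p : Sym2 V) : Prop :=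
  ∀ u ∈ p, ∀ v ∈ p, c u = c v

/-- The number of intracluster edges, `∑ₖ |Eₖ|`. -/
def intraEdges (G : SimpleGraph V) (c : V → ℕ) : ℕ :=
  ((edgeFin G).filter (fun e => sameCluster c e)).card

/-- The number of extracluster edges. -/
def extraEdges (G : SimpleGraph V) (c : V → ℕ) : ℕ :=
  ((edgeFin G).filter (fun e => ¬ sameCluster c e)).card

/-- The intracluster edge fraction `Q_f = (∑ₖ |Eₖ|)/m`. -/
def Qf (G : SimpleGraph V) (c : V → ℕ) : ℝ := (intraEdges G c : ℝ) / (numEdges G : ℝ)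

/-- The null-model term `Q_0 = ∑ₖ (deg(Vₖ)/(2m))²` (summed over the nonempty clusters). -/
def Q0 (G : SimpleGraph V) (c : V → ℕ) : ℝ :=
  ∑ k ∈ Finset.univ.image c, ((clusterDeg G c k : ℝ) / (2 * (numEdges G : ℝ))) ^ 2

/-- Newman's modularity `Q_N = Q_f - Q_0`. -/
def QN (G : SimpleGraph V) (c : V → ℕ) : ℝ := Qf G c - Q0 G c

/-- The number of (nonempty) clusters of a labelling. -/
def numClusters (c : V → ℕ) : ℕ := (Finset.univ.image c).card

/-- The unordered pairs of distinct nodes. -/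
def offDiagPairs (V : Type*) [Fintype V] : Finset (Sym2 V) :=
  Finset.univ.filter (fun p => ¬ p.IsDiag)

/-- Number of node pairs in the same cluster under both clusterings. -/
def a11 (c1 c2 : V → ℕ) : ℕ :=
  ((offDiagPairs V).filter (fun p => sameCluster c1 p ∧ sameCluster c2 p)).card

/-- Number of node pairs in the same cluster under `c1` but not under `c2`. -/
def a10 (c1 c2 : V → ℕ) : ℕ :=
  ((offDiagPairs V).filter (fun p => sameCluster c1 p ∧ ¬ sameCluster c2 p)).card

/-- Number of node pairs in the same cluster under `c2` but not under `c1`. -/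
def a01 (c1 c2 : V → ℕ) : ℕ :=
  ((offDiagPairs V).filter (fun p => ¬ sameCluster c1 p ∧ sameCluster c2 p)).card

/-- The Jaccard similarity index of two clusterings. -/
def jaccard (c1 c2 : V → ℕ) : ℝ :=
  (a11 c1 c2 : ℝ) / ((a10 c1 c2 : ℝ) + (a01 c1 c2 : ℝ) + (a11 c1 c2 : ℝ))

/-- Number of (unordered) node pairs lying in the same cluster. -/
def samePairCount (c : V → ℕ) : ℕ :=
  ((offDiagPairs V).filter (fun p => sameCluster c p)).card

/-- The nodes `0,…,n-1` are split into consecutive blocks of alternating sizes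
`N₁,N₂,N₁,N₂,…`; `blockIdx N1 N2 v` is the index of the block of node `v`. -/
def blockIdx (N1 N2 v : ℕ) : ℕ :=
  2 * (v / (N1 + N2)) + (if v % (N1 + N2) < N1 then 0 else 1)

/-- The graph `G_{K,N₁,N₂}`: a disjoint union of `K` paths on `N₁` nodes and `K` paths on
`N₂` nodes, arranged as alternating consecutive blocks of `{0,…,K(N₁+N₂)-1}`. -/
def graphG (K N1 N2 : ℕ) : SimpleGraph (Fin (K * (N1 + N2))) where
  Adj u v := (u.val + 1 = v.val ∨ v.val + 1 = u.val) ∧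
             blockIdx N1 N2 u.val = blockIdx N1 N2 v.val
  symm := by constructor; rintro u v ⟨h1, h2⟩; exact ⟨h1.symm, h2.symm⟩
  loopless := by constructor; rintro u ⟨h1 | h1, -⟩ <;> omega

/-- The connected graph `H_{K,N₁,N₂}`: the path on all of `{0,…,K(N₁+N₂)-1}` together with,
inside each block, all chords joining nodes of the block at distance two. -/
def graphH (K N1 N2 : ℕ) : SimpleGraph (Fin (K * (N1 + N2))) where
  Adj u v := (u.val + 1 = v.val ∨ v.val + 1 = u.val) ∨
             ((u.val + 2 = v.val ∨ v.val + 2 = u.val) ∧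
              blockIdx N1 N2 u.val = blockIdx N1 N2 v.val)
  symm := by
    constructor
    rintro u v (h1 | ⟨h2, h3⟩)
    · exact Or.inl h1.symm
    · exact Or.inr ⟨h2.symm, h3.symm⟩
  loopless := by constructor; rintro u ((h | h) | ⟨h | h, -⟩) <;> omega

/-- The natural clustering `𝐕_{K,N₁,N₂}`: the clusters are the `2K` blocks. -/
def naturalLabel (N1 N2 : ℕ) {n : ℕ} : Fin n → ℕ := fun v => blockIdx N1 N2 v.val

/-- The balanced clustering `𝐔_{K,N₁,N₂,J}` with `L = ⌊n/J⌋`: clusters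
`U_j = {(j-1)L+1,…,jL}` for `j = 1,…,J`, plus the remainder cluster `U_{J+1}`. -/
def uLabel (J : ℕ) {n : ℕ} : Fin n → ℕ := fun v => min (v.val / (n / J)) J

end BadComm

open BadComm Filter

/-!
Every edge of `G_{K,N₁,N₂}` joins two nodes of the same block, so all edges are intracluster and
`Q_N = 1 - ∑ₖ deg(Vₖ)² / (∑ₖ deg(Vₖ))²`. A block of `N` nodes is a path, of total degree
`2(N - 1)`, whence `Q_N = 1 - ((N₁-1)² + (N₂-1)²) / (K (N₁+N₂-2)²)`. For `N₁ = 3`, `N₂ = t = x²K`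
this is `1 - (4 + (t-1)²) / (K (1+t)²)`, and `(4 + (t-1)²) / (1+t)² → 1` as `t → ∞`.
-/

namespace BadComm

open Finset

section Modularity

variable {V : Type*} [Fintype V]

lemma deg_eq_degree (G : SimpleGraph V) (v : V) : deg G v = G.degree v := by
  rw [← SimpleGraph.card_neighborFinset_eq_degree, SimpleGraph.neighborFinset_eq_filter, deg]

lemma numEdges_eq_card_edgeFinset (G : SimpleGraph V) : numEdges G = #G.edgeFinset := by
  rw [numEdges, edgeFin]
  congr 1
  ext e
  simp

lemma sum_clusterDeg_eq_two_mul_numEdges (G : SimpleGraph V) {c : V → ℕ} {T : Finset ℕ}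
    (hT : ∀ v, c v ∈ T) : ∑ k ∈ T, clusterDeg G c k = 2 * numEdges G := by
  simp only [clusterDeg, deg_eq_degree]
  rw [sum_fiberwise_of_maps_to (fun v _ => hT v), numEdges_eq_card_edgeFinset,
    SimpleGraph.sum_degrees_eq_twice_card_edges]

lemma clusterDeg_eq_zero_of_notMem_image (G : SimpleGraph V) {c : V → ℕ} {k : ℕ}
    (hk : k ∉ univ.image c) : clusterDeg G c k = 0 := by
  refine sum_eq_zero fun v hv => absurd ?_ hk
  simp only [mem_filter] at hv
  exact mem_image.2 ⟨v, mem_univ v, hv.2⟩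

lemma intraEdges_eq_numEdges {G : SimpleGraph V} {c : V → ℕ}
    (hc : ∀ u v, G.Adj u v → c u = c v) : intraEdges G c = numEdges G := by
  rw [intraEdges, numEdges, filter_true_of_mem]
  intro e he u hu v hv
  induction e using Sym2.ind with
  | _ x y =>
    have hxy : G.Adj x y := by simpa [edgeFin] using he
    rcases Sym2.mem_iff.1 hu with rfl | rfl <;> rcases Sym2.mem_iff.1 hv with rfl | rfl
    exacts [rfl, hc _ _ hxy, (hc _ _ hxy).symm, rfl]

lemma QN_eq_of_forall_adj {G : SimpleGraph V} {c : V → ℕ} {T : Finset ℕ}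
    (hc : ∀ u v, G.Adj u v → c u = c v) (hT : ∀ v, c v ∈ T) (hm : numEdges G ≠ 0) :
    QN G c = 1 - (∑ k ∈ T, (clusterDeg G c k : ℝ) ^ 2) / (∑ k ∈ T, (clusterDeg G c k : ℝ)) ^ 2 := by
  have hsum : (∑ k ∈ T, (clusterDeg G c k : ℝ)) = 2 * numEdges G := by
    exact_mod_cast sum_clusterDeg_eq_two_mul_numEdges G hT
  have hQ0 : Q0 G c = ∑ k ∈ T, ((clusterDeg G c k : ℝ) / (2 * numEdges G)) ^ 2 := by
    refine sum_subset (fun k hk => ?_) (fun k _ hk => ?_)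
    · obtain ⟨v, -, rfl⟩ := mem_image.1 hk
      exact hT v
    · simp [clusterDeg_eq_zero_of_notMem_image G hk]
  rw [QN, Qf, intraEdges_eq_numEdges hc, div_self (by exact_mod_cast hm), hQ0, hsum]
  simp only [div_pow, sum_div]

end Modularity

def cutPath (n : ℕ) (b : ℕ → ℕ) : SimpleGraph (Fin n) where
  Adj u v := (u.val + 1 = v.val ∨ v.val + 1 = u.val) ∧ b u.val = b v.val
  symm := ⟨fun _ _ ⟨h, hb⟩ => ⟨h.symm, hb.symm⟩⟩
  loopless := ⟨fun _ ⟨h, _⟩ => by omega⟩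

def innerEdgeCount (n : ℕ) (b : ℕ → ℕ) (k : ℕ) : ℕ :=
  #{v ∈ range n | v + 1 < n ∧ b v = k ∧ b (v + 1) = k}

lemma clusterDeg_cutPath (n : ℕ) (b : ℕ → ℕ) (k : ℕ) :
    clusterDeg (cutPath n b) (fun v => b v) k = 2 * innerEdgeCount n b k := by
  let step : ℕ → ℕ → ℕ := fun v w => if v + 1 = w ∧ b v = k ∧ b w = k then 1 else 0
  -- an edge `{v, v + 1}` inside cluster `k` is seen once from each of its endpoints
  have hsplit : ∀ v w : Fin n, (if b v = k then (if (cutPath n b).Adj v w then 1 else 0) else 0)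
      = step v w + step w v := by
    intro v w
    simp only [cutPath, step]
    grind
  have hstep : ∑ v : Fin n, ∑ w : Fin n, step v w = innerEdgeCount n b k := by
    rw [innerEdgeCount, card_filter, Fin.sum_univ_eq_sum_range (fun v => ∑ w : Fin n, step v w)]
    refine sum_congr rfl fun v _ => ?_
    rw [Fin.sum_univ_eq_sum_range (step v)]
    simp only [step, ite_and, sum_ite_eq, mem_range]
  calc clusterDeg (cutPath n b) (fun v => b v) k
      = ∑ v : Fin n, ∑ w : Fin n, (step v w + step w v) := by
        simp only [clusterDeg, deg, card_filter, sum_filter, ← hsplit]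
        refine sum_congr rfl fun v _ => ?_
        split_ifs <;> simp
    _ = 2 * innerEdgeCount n b k := by
        rw [← hstep, two_mul]
        simp only [sum_add_distrib]
        exact congrArg _ sum_comm

lemma innerEdgeCount_of_interval {n : ℕ} {b : ℕ → ℕ} {k s l : ℕ}
    (hb : ∀ v, b v = k ↔ s ≤ v ∧ v < s + l) (hn : s + l ≤ n) :
    innerEdgeCount n b k = l - 1 := by
  have : {v ∈ range n | v + 1 < n ∧ b v = k ∧ b (v + 1) = k} = Ico s (s + l - 1) := by
    ext v
    simp only [mem_filter, mem_range, mem_Ico, hb]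
    omega
  rw [innerEdgeCount, this, Nat.card_Ico]
  omega

lemma blockIdx_eq_iff {N1 N2 : ℕ} (h : 0 < N1 + N2) (q v : ℕ) :
    (blockIdx N1 N2 v = 2 * q ↔ q * (N1 + N2) ≤ v ∧ v < q * (N1 + N2) + N1) ∧
    (blockIdx N1 N2 v = 2 * q + 1 ↔
      q * (N1 + N2) + N1 ≤ v ∧ v < q * (N1 + N2) + (N1 + N2)) := by
  have hdiv := Nat.div_eq_iff h (x := v) (y := q)
  have hlt := Nat.mod_lt v h
  have hmod : v / (N1 + N2) = q → v % (N1 + N2) = v - q * (N1 + N2) := by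
    rintro rfl
    rw [Nat.mod_eq_sub_mul_div, mul_comm]
  unfold blockIdx
  generalize q * (N1 + N2) = t at *
  split_ifs <;> omega

lemma blockIdx_lt {K N1 N2 v : ℕ} (hv : v < K * (N1 + N2)) : blockIdx N1 N2 v < 2 * K := by
  have : v / (N1 + N2) < K := Nat.div_lt_of_lt_mul (by rwa [mul_comm])
  unfold blockIdx
  split_ifs <;> omega

lemma graphG_eq_cutPath (K N1 N2 : ℕ) :
    graphG K N1 N2 = cutPath (K * (N1 + N2)) (blockIdx N1 N2) := rfl

lemma clusterDeg_graphG {K N1 N2 q : ℕ} (h : 0 < N1 + N2) (hq : q < K) :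
    clusterDeg (graphG K N1 N2) (naturalLabel N1 N2) (2 * q) = 2 * (N1 - 1) ∧
    clusterDeg (graphG K N1 N2) (naturalLabel N1 N2) (2 * q + 1) = 2 * (N2 - 1) := by
  have hblock : (q + 1) * (N1 + N2) ≤ K * (N1 + N2) := Nat.mul_le_mul_right _ hq
  rw [add_mul, one_mul] at hblock
  have hlabel : naturalLabel N1 N2 = fun v : Fin (K * (N1 + N2)) => blockIdx N1 N2 v := rfl
  rw [graphG_eq_cutPath, hlabel, clusterDeg_cutPath, clusterDeg_cutPath,
    innerEdgeCount_of_interval (fun v => (blockIdx_eq_iff h q v).1) (by omega),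
    innerEdgeCount_of_interval (s := q * (N1 + N2) + N1) (l := N2)
      (fun v => by rw [(blockIdx_eq_iff h q v).2]; omega) (by omega)]
  exact ⟨rfl, rfl⟩

lemma sum_range_two_mul {M : Type*} [AddCommMonoid M] (f : ℕ → M) (K : ℕ) :
    ∑ k ∈ range (2 * K), f k = ∑ q ∈ range K, (f (2 * q) + f (2 * q + 1)) := by
  induction K with
  | zero => simp
  | succ K ih => rw [mul_add, mul_one, sum_range_succ, sum_range_succ, sum_range_succ, ih, add_assoc]

lemma QN_graphG {K N1 N2 : ℕ} (hK : 0 < K) (hN1 : 1 ≤ N1) (hN2 : 1 ≤ N2) (h : 3 ≤ N1 + N2) :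
    QN (graphG K N1 N2) (naturalLabel N1 N2) =
      1 - (((N1 : ℝ) - 1) ^ 2 + ((N2 : ℝ) - 1) ^ 2) / (K * ((N1 : ℝ) + N2 - 2) ^ 2) := by
  have hsum {M : Type} [AddCommMonoid M] (f : ℕ → M) :
      ∑ k ∈ range (2 * K), f (clusterDeg (graphG K N1 N2) (naturalLabel N1 N2) k) =
        K • (f (2 * (N1 - 1)) + f (2 * (N2 - 1))) := by
    calc _ = ∑ _q ∈ range K, (f (2 * (N1 - 1)) + f (2 * (N2 - 1))) := by
          rw [sum_range_two_mul]
          refine sum_congr rfl fun q hq => ?_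
          obtain ⟨h1, h2⟩ := clusterDeg_graphG (N1 := N1) (N2 := N2) (by omega) (mem_range.1 hq)
          rw [h1, h2]
      _ = _ := by rw [sum_const, card_range]
  have hT (v : Fin (K * (N1 + N2))) : naturalLabel N1 N2 v ∈ range (2 * K) :=
    mem_range.2 (blockIdx_lt v.isLt)
  have hm : numEdges (graphG K N1 N2) ≠ 0 := by
    have h2m := (hsum fun d => d).symm.trans (sum_clusterDeg_eq_two_mul_numEdges _ hT)
    rw [smul_eq_mul] at h2m
    have hpos : 0 < K * (2 * (N1 - 1) + 2 * (N2 - 1)) := Nat.mul_pos hK (by omega)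
    omega
  rw [QN_eq_of_forall_adj (c := naturalLabel N1 N2)
    (fun (_ _ : Fin _) (huv : (graphG K N1 N2).Adj _ _) => huv.2) hT hm,
    hsum (fun d => (d : ℝ) ^ 2), hsum (fun d => (d : ℝ))]
  push_cast [Nat.cast_sub hN1, Nat.cast_sub hN2, nsmul_eq_mul]
  have hK0 : (K : ℝ) ≠ 0 := by positivity
  have hN : (N1 : ℝ) + N2 - 2 ≠ 0 := by
    have : (3 : ℝ) ≤ N1 + N2 := by exact_mod_cast h
    linarith
  rw [show 2 * ((N1 : ℝ) - 1) + 2 * ((N2 : ℝ) - 1) = 2 * ((N1 : ℝ) + N2 - 2) by ring]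
  field_simp

lemma tendsto_add_sub_one_sq_div_one_add_sq (c : ℝ) :
    Tendsto (fun t : ℝ => (c + (t - 1) ^ 2) / (1 + t) ^ 2) atTop (nhds 1) := by
  have hcont : ContinuousAt (fun u : ℝ => (c * u ^ 2 + (1 - u) ^ 2) / (u + 1) ^ 2) 0 :=
    ContinuousAt.div (by fun_prop) (by fun_prop) (by norm_num)
  have hg : Tendsto (fun u : ℝ => (c * u ^ 2 + (1 - u) ^ 2) / (u + 1) ^ 2) (nhds 0) (nhds 1) := by
    simpa using hcont.tendsto
  refine (hg.comp tendsto_inv_atTop_zero).congr' ?_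
  filter_upwards [eventually_gt_atTop 0] with t ht
  rw [Function.comp_apply]
  field_simp

end BadComm

/-- with `N₁ = 3`, `N₂ = x²K`,
`Q_N(𝐕_{K,3,x²K}, G_{K,3,x²K}) = 1 − (4 + (x²K−1)²)/(K(1 + x²K)²)`, which converges
to `1 − 1/K` as `x → ∞`. -/
theorem statement11 (K : ℕ) (hK : 1 ≤ K) :
    (∀ x : ℕ, 1 ≤ x →
      QN (graphG K 3 (x ^ 2 * K)) (naturalLabel 3 (x ^ 2 * K)) =
        1 - (4 + ((x : ℝ) ^ 2 * (K : ℝ) - 1) ^ 2) /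
            ((K : ℝ) * (1 + (x : ℝ) ^ 2 * (K : ℝ)) ^ 2)) ∧
    Tendsto (fun x : ℕ => QN (graphG K 3 (x ^ 2 * K)) (naturalLabel 3 (x ^ 2 * K)))
      atTop (nhds (1 - 1 / (K : ℝ))) := by
  have hQ (x : ℕ) (hx : 1 ≤ x) :
      QN (graphG K 3 (x ^ 2 * K)) (naturalLabel 3 (x ^ 2 * K)) =
        1 - (4 + ((x : ℝ) ^ 2 * (K : ℝ) - 1) ^ 2) /
            ((K : ℝ) * (1 + (x : ℝ) ^ 2 * (K : ℝ)) ^ 2) := by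
    have hN2 : 1 ≤ x ^ 2 * K := Nat.one_le_iff_ne_zero.2 (by positivity)
    rw [QN_graphG hK (by norm_num) hN2 (by omega)]
    push_cast
    ring
  refine ⟨hQ, ?_⟩
  have ht : Tendsto (fun x : ℕ => (x : ℝ) ^ 2 * K) atTop atTop :=
    ((tendsto_pow_atTop two_ne_zero).comp tendsto_natCast_atTop_atTop).atTop_mul_const
      (by positivity)
  have hlim := (((tendsto_add_sub_one_sq_div_one_add_sq 4).comp ht).const_mul
    (1 / (K : ℝ))).const_sub 1
  rw [mul_one] at hlim
  refine hlim.congr' ?_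
  filter_upwards [eventually_ge_atTop 1] with x hx
  rw [hQ x hx, Function.comp_apply, div_mul_div_comm, one_mul]
end
end

section
/- For all integers K ≥ 1, N₁,N₂ ≥ 5 and 1 ≤ J ≤ n = K(N₁+N₂), the clustering 𝐔_{K,N₁,N₂,J} of the graph H_{K,N₁,N₂} has at most 3J extracluster edges, i.e. the number of edges of H_{K,N₁,N₂} whose two endpoints lie in different clusters of 𝐔_{K,N₁,N₂,J} is at most 3J. -/
open scoped Classical

noncomputable section

open BadComm

/-!
Cutting the path `0, 1, …, n-1` into consecutive intervals of length `L`, an edge can only join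
two clusters if it crosses one of the `J` cut points `L, 2L, …, JL`. Every edge of `H_{K,N₁,N₂}`
joins nodes at distance at most two, and only three such pairs cross a given cut point `m`:
`{m-1, m}`, `{m-2, m}` and `{m-1, m+1}`.
-/

namespace BadComm

section Sym2

variable {V : Type*}

theorem sameCluster_mk_iff {c : V → ℕ} {a b : V} : sameCluster c s(a, b) ↔ c a = c b := by
  refine ⟨fun h => h a (Sym2.mem_mk_left a b) b (Sym2.mem_mk_right a b), fun h => ?_⟩
  rintro u hu v hv
  rw [Sym2.mem_iff] at hu hv
  rcases hu with rfl | rfl <;> rcases hv with rfl | rfl <;> simp [h]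

theorem adj_inf_sup_of_mem_extra [Fintype V] [LinearOrder V] {G : SimpleGraph V} {c : V → ℕ}
    {e : Sym2 V}
    (he : e ∈ (edgeFin G).filter (fun e => ¬ sameCluster c e)) :
    G.Adj e.inf e.sup ∧ c e.inf ≠ c e.sup := by
  have hmk : s(e.inf, e.sup) = e := Sym2.sortEquiv.symm_apply_apply e
  rw [← hmk] at he
  simpa only [edgeFin, Finset.mem_filter, Finset.mem_univ, true_and, SimpleGraph.mem_edgeSet,
    sameCluster_mk_iff] using he

end Sym2

def BandwidthLE {n : ℕ} (G : SimpleGraph (Fin n)) (b : ℕ) : Prop :=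
  ∀ u v, G.Adj u v → v.val ≤ u.val + b

theorem graphH_bandwidthLE (K N1 N2 : ℕ) : BandwidthLE (graphH K N1 N2) 2 := by
  rintro u v ((h | h) | ⟨h | h, -⟩) <;> omega

/-- The positions `(i, k)` of a pair `{m - 1 - i, m + k}` of nodes at distance at most `b`
straddling a cut point `m`. -/
def crossingOffsets (b : ℕ) : Finset (ℕ × ℕ) :=
  (Finset.range b ×ˢ Finset.range b).filter (fun p => p.1 + p.2 < b)

theorem card_crossingOffsets_two : (crossingOffsets 2).card = 3 := by
  decide

section Cut

variable {L u v : ℕ}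

theorem lt_cut_and_cut_le (h : u / L < v / L) : u < (u / L + 1) * L ∧ (u / L + 1) * L ≤ v := by
  have hL : 0 < L := Nat.pos_of_ne_zero fun hL => by simp [hL] at h
  refine ⟨?_, ?_⟩
  · rw [mul_comm]
    exact Nat.lt_mul_div_succ u hL
  · exact (Nat.mul_le_mul_right L h).trans (Nat.div_mul_le_self v L)

theorem div_lt_div_of_min_ne {J : ℕ} (huv : u ≤ v) (h : min (u / L) J ≠ min (v / L) J) :
    u / L < v / L ∧ u / L < J := by
  have := Nat.div_le_div_right (c := L) huv
  omega

/-- Encodes a pair `u < v` straddling the cut point `m = (u / L + 1) * L` by the index of `m` and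
the offsets `(m - 1 - u, v - m)`. -/
def cutCode (L u v : ℕ) : ℕ × ℕ × ℕ :=
  (u / L, (u / L + 1) * L - 1 - u, v - (u / L + 1) * L)

theorem cutCode_mem {J b : ℕ} (hJ : u / L < J) (huv : u / L < v / L) (hb : v ≤ u + b) :
    cutCode L u v ∈ Finset.range J ×ˢ crossingOffsets b := by
  have := lt_cut_and_cut_le huv
  simp only [cutCode, crossingOffsets, Finset.mem_product, Finset.mem_range, Finset.mem_filter]
  omega

theorem eq_of_cutCode_eq {u' v' : ℕ} (huv : u / L < v / L) (huv' : u' / L < v' / L)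
    (h : cutCode L u v = cutCode L u' v') : u = u' ∧ v = v' := by
  simp only [cutCode, Prod.mk.injEq] at h
  obtain ⟨hdiv, hi, hk⟩ := h
  obtain ⟨hu, hv⟩ := lt_cut_and_cut_le huv
  obtain ⟨hu', hv'⟩ := lt_cut_and_cut_le huv'
  rw [hdiv] at hi hk hu hv
  omega

end Cut

theorem extraEdges_min_div_le {n b L J : ℕ} {G : SimpleGraph (Fin n)} (hG : BandwidthLE G b) :
    extraEdges G (fun v : Fin n => min (v.val / L) J) ≤ J * (crossingOffsets b).card := by
  set c : Fin n → ℕ := fun v => min (v.val / L) J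
  have hcut : ∀ e ∈ (edgeFin G).filter (fun e => ¬ sameCluster c e),
      (e.inf.val / L < e.sup.val / L ∧ e.inf.val / L < J) ∧ e.sup.val ≤ e.inf.val + b := by
    intro e he
    obtain ⟨hadj, hne⟩ := adj_inf_sup_of_mem_extra he
    exact ⟨div_lt_div_of_min_ne (Sym2.inf_le_sup e) hne, hG _ _ hadj⟩
  refine (Finset.card_le_card_of_injOn (t := Finset.range J ×ˢ crossingOffsets b)
    (fun e => cutCode L e.inf.val e.sup.val) ?_ ?_).trans_eq (by simp [Finset.card_product])
  · intro e he
    obtain ⟨⟨huv, hJ⟩, hb⟩ := hcut e he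
    exact cutCode_mem hJ huv hb
  · intro e he e' he' h
    obtain ⟨hinf, hsup⟩ := eq_of_cutCode_eq (hcut e he).1.1 (hcut e' he').1.1 h
    exact Sym2.inf_eq_inf_and_sup_eq_sup.mp ⟨Fin.ext hinf, Fin.ext hsup⟩

end BadComm

theorem statement16_general (K N1 N2 J : ℕ) :
    extraEdges (graphH K N1 N2) (uLabel J) ≤ 3 * J := by
  refine (extraEdges_min_div_le (graphH_bandwidthLE K N1 N2)).trans_eq ?_
  rw [card_crossingOffsets_two, mul_comm]

/-- the clustering `𝐔_{K,N₁,N₂,J}` of `H_{K,N₁,N₂}` has at most `3J`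
extracluster edges. -/
theorem statement16 (K N1 N2 J : ℕ) (hK : 1 ≤ K) (h1 : 5 ≤ N1) (h2 : 5 ≤ N2)
    (hJ1 : 1 ≤ J) (hJn : J ≤ K * (N1 + N2)) :
    extraEdges (graphH K N1 N2) (uLabel J) ≤ 3 * J :=
  statement16_general K N1 N2 J
end
end
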